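/- Let 0 < q < 1, N ≥ 1, R > 1, λ ∈ ℝ, and let n ≥ 1 be an integer. Let M₁, …, M_N be nonnegative integers and let 1 ≤ j ≤ k ≤ N be indices with M_j = M_{j+1} = ⋯ = M_k. For 1 ≤ a ≤ N define I_a as the iterated circle integral over the circles |w₁| = R, …, |w_N| = R (centered at the origin) of the function w_a · ( ∑_{p=0}^{n−2} λ^p (w₁ + ⋯ + w_N)^{n−2−p} ) · B(w₁,…,w_N) · ∏_{i=1}^{N} (1 − w_i)^{−M_i − 1} / w_i, where the middle factor is the polynomial (λ^{n−1} − (w₁+⋯+w_N)^{n−1})/(λ − (w₁+⋯+w_N)) (interpreted as 0 when n = 1). Then I_k = q^{j−k} · I_j. -/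

import Mathlib

open Finset

/-- `Bprod q w = ∏_{1 ≤ i < j ≤ N} (w_i − w_j)/(w_i − q·w_j)`. -/
noncomputable def Bprod (q : ℂ) {N : ℕ} (w : Fin N → ℂ) : ℂ :=
  ∏ p ∈ univ.filter (fun p : Fin N × Fin N => p.1 < p.2),
    (w p.1 - w p.2) / (w p.1 - q * w p.2)

/-- Iterated circle integral: `itCircleInt n c r f` integrates the `j`-th variable over
the circle of center `c j` and radius `r j`, for `j = 1, …, n`. -/
noncomputable def itCircleInt : (n : ℕ) → (Fin n → ℂ) → (Fin n → ℝ) → ((Fin n → ℂ) → ℂ) → ℂ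
  | 0, _, _, f => f (fun i => i.elim0)
  | n + 1, c, r, f =>
      ∮ z in C(c 0, r 0),
        itCircleInt n (fun i => c i.succ) (fun i => r i.succ) (fun v => f (Fin.cons z v))

/-- The integrand of the integral `I_a`: `w_a · (∑_{p=0}^{n−2} λ^p (w₁+⋯+w_N)^{n−2−p})
· B(w₁,…,w_N) · ∏_i (1 − w_i)^{−M_i−1}/w_i`, the middle factor being the polynomial form
of `(λ^{n−1} − (w₁+⋯+w_N)^{n−1})/(λ − (w₁+⋯+w_N))` (interpreted as `0` when `n = 1`). -/
noncomputable def integrandI (lam : ℝ) (n : ℕ) {N : ℕ} (q : ℝ) (M : Fin N → ℕ)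
    (a : Fin N) (w : Fin N → ℂ) : ℂ :=
  w a * (∑ p ∈ Finset.range (n - 1), (lam : ℂ) ^ p * (∑ i, w i) ^ (n - 2 - p)) *
    Bprod (q : ℂ) w * ∏ i : Fin N, (1 - w i) ^ (-(M i : ℤ) - 1) / w i

/-!
Fix adjacent indices `a, a + 1` with `M_a = M_{a+1}`. The identity
`(w_{a+1} - q w_a) B(w ∘ (a a+1)) = -(w_a - q w_{a+1}) B(w)` shows that the integrand of
`I_a - q I_{a+1}` changes sign when `w_a` and `w_{a+1}` are swapped, while the remaining factors
are symmetric in them. The torus `|w_1| = ⋯ = |w_N| = R` is invariant under this swap, so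
`I_a = q I_{a+1}`; iterating from `j` to `k` gives the claim. On the torus, `R > 1` and `q < 1`
keep all denominators away from zero, so the iterated integral is the torus integral of a
continuous function.
-/

open MeasureTheory Complex

lemma Bprod_comp_swap {N : ℕ} (q : ℂ) {a b : Fin N} (hab : (a : ℕ) + 1 = b) (w : Fin N → ℂ)
    (ha : w a - q * w b ≠ 0) (hb : w b - q * w a ≠ 0) :
    (w b - q * w a) * Bprod q (w ∘ Equiv.swap a b) = -((w a - q * w b) * Bprod q w) := by
  set S := univ.filter fun p : Fin N × Fin N => p.1 < p.2
  set g : Fin N × Fin N → ℂ := fun p => (w p.1 - w p.2) / (w p.1 - q * w p.2)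
  have hab_mem : (a, b) ∈ S := by simp [S]; omega
  have hba : (b, a) ∉ S.erase (a, b) := by simp [S]; omega
  -- Swapping the adjacent indices `a, b` preserves the order of every other pair.
  have hS : S.map ((Equiv.swap a b).prodCongr (Equiv.swap a b)).toEmbedding
      = insert (b, a) (S.erase (a, b)) := by
    ext ⟨x, y⟩
    simp only [mem_map_equiv, Equiv.prodCongr_symm, Equiv.symm_swap, Equiv.prodCongr_apply,
      Prod.map, S, mem_filter, mem_univ, true_and, mem_insert, mem_erase, ne_eq, Prod.mk.injEq,
      Equiv.swap_apply_def]
    split_ifs <;> simp_all [Fin.ext_iff] <;> omega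
  calc (w b - q * w a) * Bprod q (w ∘ Equiv.swap a b)
    _ = (w b - q * w a) *
          ∏ p ∈ S.map ((Equiv.swap a b).prodCongr (Equiv.swap a b)).toEmbedding, g p := by
      rw [prod_map]; rfl
    _ = (w b - q * w a) * g (b, a) * ∏ p ∈ S.erase (a, b), g p := by
      rw [hS, prod_insert hba, mul_assoc]
    _ = -((w a - q * w b) * g (a, b) * ∏ p ∈ S.erase (a, b), g p) := by
      simp only [g]; rw [mul_div_cancel₀ _ hb, mul_div_cancel₀ _ ha]; ring
    _ = -((w a - q * w b) * Bprod q w) := by rw [mul_assoc, mul_prod_erase _ _ hab_mem]; rfl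

lemma integrandI_sub_comp_swap (lam : ℝ) (n : ℕ) {N : ℕ} (q : ℝ) (M : Fin N → ℕ)
    {a b : Fin N} (hab : (a : ℕ) + 1 = b) (hM : M a = M b) (w : Fin N → ℂ)
    (ha : w a - q * w b ≠ 0) (hb : w b - q * w a ≠ 0) :
    integrandI lam n q M a (w ∘ Equiv.swap a b)
        - q * integrandI lam n q M b (w ∘ Equiv.swap a b)
      = -(integrandI lam n q M a w - q * integrandI lam n q M b w) := by
  have hMσ : ∀ i, M (Equiv.swap a b i) = M i := fun i => by
    rw [Equiv.swap_apply_def]; split_ifs <;> simp_all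
  have hsum : ∑ i, (w ∘ Equiv.swap a b) i = ∑ i, w i := Equiv.sum_comp _ w
  have hprod : ∏ i, (1 - (w ∘ Equiv.swap a b) i) ^ (-(M i : ℤ) - 1) / (w ∘ Equiv.swap a b) i
      = ∏ i, (1 - w i) ^ (-(M i : ℤ) - 1) / w i :=
    Fintype.prod_equiv (Equiv.swap a b) _ _ fun i => by simp only [Function.comp, hMσ]
  simp only [integrandI, hsum, hprod]
  simp only [Function.comp, Equiv.swap_apply_left, Equiv.swap_apply_right]
  linear_combination ((∑ p ∈ range (n - 1), (lam : ℂ) ^ p * (∑ i, w i) ^ (n - 2 - p)) *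
    ∏ i, (1 - w i) ^ (-(M i : ℤ) - 1) / w i) * Bprod_comp_swap q hab w ha hb

lemma itCircleInt_eq_torusIntegral {N : ℕ} (c : Fin N → ℂ) (r : Fin N → ℝ)
    (f : (Fin N → ℂ) → ℂ) (hf : Continuous (f ∘ torusMap c r)) :
    itCircleInt N c r f = torusIntegral f c r := by
  induction N with
  | zero =>
    rw [torusIntegral_dim0]
    exact congrArg f (Subsingleton.elim _ _)
  | succ N ih =>
    rw [itCircleInt, torusIntegral_succ (hf.continuousOn.integrableOn_compact isCompact_Icc)]
    refine intervalIntegral.integral_congr fun θ _ => congrArg _ (ih _ _ _ ?_)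
    have hcons : ∀ Θ : Fin N → ℝ, torusMap c r (Fin.cons θ Θ)
        = Fin.cons (circleMap (c 0) (r 0) θ) (torusMap (c ∘ Fin.succ) (r ∘ Fin.succ) Θ) :=
      fun Θ => funext fun i => Fin.cases rfl (fun _ => rfl) i
    have : Continuous fun Θ : Fin N → ℝ => (Fin.cons θ Θ : Fin (N + 1) → ℝ) :=
      continuous_pi fun i => Fin.cases continuous_const continuous_apply i
    simpa [Function.comp_def, hcons] using hf.comp this

lemma torusIntegral_congr {N : ℕ} {f g : (Fin N → ℂ) → ℂ} {c : Fin N → ℂ} {r : Fin N → ℝ}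
    (h : ∀ θ, f (torusMap c r θ) = g (torusMap c r θ)) :
    torusIntegral f c r = torusIntegral g c r := by
  simp only [torusIntegral, h]

lemma torusIntegral_comp_perm {N : ℕ} (σ : Equiv.Perm (Fin N)) (c : ℂ) (R : ℝ)
    (f : (Fin N → ℂ) → ℂ) :
    torusIntegral (fun w => f (w ∘ σ)) (fun _ => c) (fun _ => R)
      = torusIntegral f (fun _ => c) (fun _ => R) := by
  set e := (MeasurableEquiv.piCongrLeft (fun _ : Fin N => ℝ) σ).symm
  have he : ∀ θ, e θ = θ ∘ σ := fun θ => rfl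
  have hpre : e ⁻¹' Set.Icc 0 (fun _ => 2 * Real.pi) = Set.Icc 0 (fun _ => 2 * Real.pi) := by
    ext θ
    simp only [Set.mem_preimage, Set.mem_Icc, Pi.le_def, he, Function.comp, Pi.zero_apply]
    exact and_congr (σ.forall_congr_right (q := fun i => 0 ≤ θ i))
      (σ.forall_congr_right (q := fun i => θ i ≤ 2 * Real.pi))
  rw [torusIntegral, torusIntegral]
  conv_rhs => rw [← (volume_measurePreserving_piCongrLeft (fun _ : Fin N => ℝ) σ).symm
    |>.setIntegral_preimage_emb e.measurableEmbedding, hpre]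
  refine setIntegral_congr_fun measurableSet_Icc fun θ _ => ?_
  rw [← Equiv.prod_comp σ fun i => (R : ℂ) * exp (θ i * I) * I]
  rfl

lemma sub_mul_ne_zero_of_norm_eq {z w q : ℂ} (hzw : ‖z‖ = ‖w‖) (hw : w ≠ 0) (hq : ‖q‖ ≠ 1) :
    z - q * w ≠ 0 := by
  intro h
  rw [sub_eq_zero] at h
  rw [h, norm_mul] at hzw
  exact hq (mul_eq_right₀ (norm_ne_zero_iff.mpr hw) |>.mp hzw)

section Torus

variable {N : ℕ} {R : ℝ} (θ : Fin N → ℝ)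

lemma norm_torusMap_zero_apply (i : Fin N) :
    ‖torusMap (fun _ => 0) (fun _ => R) θ i‖ = |R| := by
  simp [torusMap]

lemma torusMap_zero_apply_ne_zero (hR0 : R ≠ 0) (i : Fin N) :
    torusMap (fun _ => 0) (fun _ => R) θ i ≠ 0 := fun h =>
  (abs_pos.mpr hR0).ne (by rw [← norm_torusMap_zero_apply θ i, h, norm_zero])

lemma torusMap_zero_apply_ne_one (hR1 : |R| ≠ 1) (i : Fin N) :
    torusMap (fun _ => 0) (fun _ => R) θ i ≠ 1 := fun h =>
  hR1 (by rw [← norm_torusMap_zero_apply θ i, h, norm_one])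

lemma torusMap_zero_apply_sub_mul_ne_zero {q : ℂ} (hq : ‖q‖ ≠ 1) (hR0 : R ≠ 0) (i j : Fin N) :
    torusMap (fun _ => 0) (fun _ => R) θ i - q * torusMap (fun _ => 0) (fun _ => R) θ j ≠ 0 :=
  sub_mul_ne_zero_of_norm_eq
    ((norm_torusMap_zero_apply θ i).trans (norm_torusMap_zero_apply θ j).symm)
    (torusMap_zero_apply_ne_zero θ hR0 j) hq

end Torus

lemma Continuous.integrandI (lam : ℝ) (n : ℕ) {N : ℕ} (q : ℝ) (M : Fin N → ℕ) (a : Fin N)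
    {X : Type*} [TopologicalSpace X] {w : X → Fin N → ℂ} (hw : Continuous w)
    (h0 : ∀ x i, w x i ≠ 0) (h1 : ∀ x i, w x i ≠ 1) (hq : ∀ x i j, w x i - q * w x j ≠ 0) :
    Continuous fun x => integrandI lam n q M a (w x) := by
  have hwi : ∀ i, Continuous fun x => w x i := fun i => (continuous_apply i).comp hw
  unfold _root_.integrandI Bprod
  refine Continuous.mul (by fun_prop (disch := intros; apply hq)) <| continuous_finsetProd _
    fun i _ => .div (.zpow₀ (by fun_prop) _ fun x => .inl (sub_ne_zero.mpr (h1 x i).symm))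
      (hwi i) (h0 · i)

lemma continuous_integrandI_comp_torusMap (lam : ℝ) (n : ℕ) {N : ℕ} {q : ℝ} (hq : |q| ≠ 1)
    (M : Fin N → ℕ) (a : Fin N) {R : ℝ} (hR0 : R ≠ 0) (hR1 : |R| ≠ 1) :
    Continuous (integrandI lam n q M a ∘ torusMap (fun _ => 0) (fun _ => R)) :=
  .integrandI lam n q M a (by unfold torusMap; fun_prop) (torusMap_zero_apply_ne_zero · hR0)
    (torusMap_zero_apply_ne_one · hR1)
    (torusMap_zero_apply_sub_mul_ne_zero · (by simpa using hq) hR0)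

lemma torusIntegral_integrandI_eq_mul (lam : ℝ) (n : ℕ) {N : ℕ} {q : ℝ} (hq : |q| ≠ 1)
    (M : Fin N → ℕ) {a b : Fin N} (hab : (a : ℕ) + 1 = b) (hM : M a = M b)
    {R : ℝ} (hR0 : R ≠ 0) (hR1 : |R| ≠ 1) :
    torusIntegral (integrandI lam n q M a) (fun _ => 0) (fun _ => R)
      = q * torusIntegral (integrandI lam n q M b) (fun _ => 0) (fun _ => R) := by
  have hint (c : Fin N) : TorusIntegrable (integrandI lam n q M c) (fun _ => 0) (fun _ => R) :=
    (continuous_integrandI_comp_torusMap lam n hq M c hR0 hR1).continuousOn.integrableOn_compact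
      isCompact_Icc
  have hint' :
      TorusIntegrable (fun w => q * integrandI lam n q M b w) (fun _ => 0) (fun _ => R) :=
    (hint b).const_mul _
  have hne (θ : Fin N → ℝ) :=
    torusMap_zero_apply_sub_mul_ne_zero (R := R) θ (q := q) (by simpa using hq) hR0
  have hzero : torusIntegral (fun w => integrandI lam n q M a w - q * integrandI lam n q M b w)
      (fun _ => 0) (fun _ => R) = 0 := by
    rw [← self_eq_neg, ← torusIntegral_neg, ← torusIntegral_comp_perm (Equiv.swap a b)]
    exact torusIntegral_congr fun θ =>
      integrandI_sub_comp_swap lam n q M hab hM _ (hne θ a b) (hne θ b a)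
  rwa [torusIntegral_sub (hint a) hint', torusIntegral_const_mul, sub_eq_zero] at hzero

lemma eq_pow_mul_of_eq_mul_succ {α : Type*} [Monoid α] {f : ℕ → α} {q : α} {j k : ℕ}
    (hjk : j ≤ k) (h : ∀ m, j ≤ m → m < k → f m = q * f (m + 1)) : f j = q ^ (k - j) * f k := by
  induction k, hjk using Nat.le_induction with
  | base => simp
  | succ k hjk ih =>
    rw [ih fun m hjm hmk => h m hjm (by omega), h k hjk (by omega), Nat.sub_add_comm hjk,
      pow_succ, mul_assoc]

/-- If `M_j = M_{j+1} = ⋯ = M_k` (1-indexed), then the iterated circle integrals `I_a`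
over circles `|w| = R > 1` satisfy `I_k = q^{j−k}·I_j`. -/
theorem integral_q_shift (q : ℝ) (hq0 : 0 < q) (hq1 : q < 1)
    (N : ℕ) (R : ℝ) (hR : 1 < R) (lam : ℝ) (n : ℕ)
    (M : Fin N → ℕ) (j k : ℕ) (hj : 1 ≤ j) (hjk : j ≤ k) (hkN : k ≤ N)
    (hM : ∀ i : Fin N, j - 1 ≤ (i : ℕ) → (i : ℕ) ≤ k - 1 → M i = M ⟨j - 1, by omega⟩) :
    itCircleInt N (fun _ => 0) (fun _ => R) (integrandI lam n q M ⟨k - 1, by omega⟩)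
      = (q : ℂ) ^ ((j : ℤ) - (k : ℤ)) *
        itCircleInt N (fun _ => 0) (fun _ => R) (integrandI lam n q M ⟨j - 1, by omega⟩) := by
  have hq : |q| ≠ 1 := (abs_of_pos hq0).trans_ne hq1.ne
  have hR0 : R ≠ 0 := by positivity
  have hR1 : |R| ≠ 1 := (abs_of_pos (by positivity)).trans_ne hR.ne'
  simp only [itCircleInt_eq_torusIntegral _ _ _
    (continuous_integrandI_comp_torusMap lam n hq M _ hR0 hR1)]
  let I (m : ℕ) : ℂ :=
    if h : m < N then torusIntegral (integrandI lam n q M ⟨m, h⟩) (fun _ => 0) (fun _ => R) else 0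
  have hshift : I (j - 1) = (q : ℂ) ^ (k - 1 - (j - 1)) * I (k - 1) :=
    eq_pow_mul_of_eq_mul_succ (by omega) fun m hjm hmk => by
      have hm : m + 1 < N := by omega
      simp only [I, dif_pos hm, dif_pos (Nat.lt_of_succ_lt hm)]
      refine torusIntegral_integrandI_eq_mul lam n hq M rfl ?_ hR0 hR1
      rw [hM ⟨m, _⟩ hjm (by dsimp; omega), hM ⟨m + 1, hm⟩ (by dsimp; omega) (by dsimp; omega)]
  simp only [I, dif_pos (show j - 1 < N by omega), dif_pos (show k - 1 < N by omega)] at hshift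
  rw [hshift, ← mul_assoc, ← zpow_natCast, ← zpow_add₀ (by exact_mod_cast hq0.ne'),
    show (j : ℤ) - k + ((k - 1 - (j - 1) : ℕ) : ℤ) = 0 by omega, zpow_zero, one_mul]
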